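/- arXiv:1405.5960 — 6 statements merged into one kernel-verified Lean document; each statement's English description precedes it below -/
import Mathlib

section
/- Let L be the graph Laplacian of a connected graph (symmetric PSD with null space exactly span{1_N}), and let Z* be a solution of the LASS problem min λ·tr(Zᵀ L Z) − tr(Gᵀ Z) s.t. Z 1_K = 1_N, Z ≥ 0. Then any other solution has the form Z* + 1_N pᵀ where p ∈ ℝ^K satisfies pᵀ 1_K = 0, pᵀ(Gᵀ 1_N) = 0, and Z* + 1_N pᵀ ≥ 0. -/
open Matrix

/-- Feasibility for the LASS problem. -/
def LassFeasible {N K : ℕ} (Z : Matrix (Fin N) (Fin K) ℝ) : Prop :=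
  Z *ᵥ (1 : Fin K → ℝ) = (1 : Fin N → ℝ) ∧ ∀ n k, 0 ≤ Z n k

/-- The LASS objective. -/
noncomputable def lassObj {N K : ℕ} (lam : ℝ) (L : Matrix (Fin N) (Fin N) ℝ)
    (G : Matrix (Fin N) (Fin K) ℝ) (Z : Matrix (Fin N) (Fin K) ℝ) : ℝ :=
  lam * (Zᵀ * L * Z).trace - (Gᵀ * Z).trace

/-! The objective is a convex quadratic: at the midpoint of two feasible points it lies below
the average of their values by `λ/4 · tr(Dᵀ L D)`, `D` their difference. For two minimisers this
forces `tr(Dᵀ L D) = 0`, so `D = 1 pᵀ` by connectedness. Feasible points have unit row sums, hence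
`pᵀ 1 = 0`; and since `L 1 = 0`, shifting by `1 pᵀ` changes the objective by exactly `-pᵀ Gᵀ 1`,
which must therefore vanish. -/

lemma Matrix.PosSemidef.trace_transpose_mul_mul_nonneg {m n : Type*} [Fintype m] [Fintype n]
    {A : Matrix m m ℝ} (hA : A.PosSemidef) (B : Matrix m n ℝ) : 0 ≤ (Bᵀ * A * B).trace := by
  simpa only [conjTranspose_eq_transpose_of_trivial] using
    (hA.conjTranspose_mul_mul_same B).trace_nonneg

lemma convex_setOf_lassFeasible {N K : ℕ} :
    Convex ℝ {Z : Matrix (Fin N) (Fin K) ℝ | LassFeasible Z} := by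
  rintro Z ⟨hZ1, hZ0⟩ W ⟨hW1, hW0⟩ a b ha hb hab
  refine ⟨?_, fun n k => ?_⟩
  · rw [add_mulVec, smul_mulVec, smul_mulVec, hZ1, hW1, ← add_smul, hab, one_smul]
  · simp only [Matrix.add_apply, Matrix.smul_apply, smul_eq_mul]
    have := hZ0 n k
    have := hW0 n k
    positivity

lemma lassObj_midpoint {N K : ℕ} (lam : ℝ) (L : Matrix (Fin N) (Fin N) ℝ)
    (G Z W : Matrix (Fin N) (Fin K) ℝ) :
    lassObj lam L G ((1 / 2 : ℝ) • Z + (1 / 2 : ℝ) • W) =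
      (lassObj lam L G Z + lassObj lam L G W) / 2 - lam / 4 * ((Z - W)ᵀ * L * (Z - W)).trace := by
  simp only [lassObj, transpose_add, transpose_smul, transpose_sub, Matrix.add_mul,
    Matrix.mul_add, Matrix.sub_mul, Matrix.mul_sub, Matrix.smul_mul, Matrix.mul_smul, trace_add,
    trace_sub, trace_smul, smul_eq_mul]
  ring

lemma trace_quadForm_sub_eq_zero_of_minimizer {N K : ℕ} {lam : ℝ} (hlam : 0 < lam)
    {L : Matrix (Fin N) (Fin N) ℝ} (hL : L.PosSemidef) {G Z W : Matrix (Fin N) (Fin K) ℝ}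
    (hZ : LassFeasible Z) (hZmin : ∀ Y, LassFeasible Y → lassObj lam L G Z ≤ lassObj lam L G Y)
    (hW : LassFeasible W) (hWZ : lassObj lam L G W ≤ lassObj lam L G Z) :
    ((Z - W)ᵀ * L * (Z - W)).trace = 0 := by
  have hmid : LassFeasible ((1 / 2 : ℝ) • Z + (1 / 2 : ℝ) • W) :=
    convex_setOf_lassFeasible hZ hW (by norm_num) (by norm_num) (by norm_num)
  have hZmid := hZmin _ hmid
  rw [lassObj_midpoint] at hZmid
  have hnonneg := hL.trace_transpose_mul_mul_nonneg (Z - W)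
  nlinarith

lemma lassObj_add_vecMulVec_one {N K : ℕ} (lam : ℝ) {L : Matrix (Fin N) (Fin N) ℝ}
    (hLsymm : L.IsSymm) (hL1 : L *ᵥ 1 = 0) (G Z : Matrix (Fin N) (Fin K) ℝ) (p : Fin K → ℝ) :
    lassObj lam L G (Z + vecMulVec 1 p) = lassObj lam L G Z - p ⬝ᵥ (Gᵀ *ᵥ 1) := by
  have hright : L * vecMulVec (1 : Fin N → ℝ) p = 0 := by rw [mul_vecMulVec, hL1, zero_vecMulVec]
  have hleft : (vecMulVec (1 : Fin N → ℝ) p)ᵀ * L = 0 := by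
    rw [← hLsymm.eq, ← transpose_mul, hright, transpose_zero]
  rw [lassObj, lassObj, transpose_add, Matrix.add_mul, hleft, add_zero, Matrix.mul_add,
    Matrix.mul_assoc Zᵀ L (vecMulVec 1 p), hright, Matrix.mul_zero, add_zero, Matrix.mul_add,
    trace_add, mul_vecMulVec, trace_vecMulVec, dotProduct_comm]
  ring

lemma dotProduct_one_eq_zero_of_lassFeasible_add_vecMulVec {N K : ℕ} [Nonempty (Fin N)]
    {Z : Matrix (Fin N) (Fin K) ℝ} {p : Fin K → ℝ} (hZ : LassFeasible Z)
    (hZp : LassFeasible (Z + vecMulVec 1 p)) : p ⬝ᵥ 1 = 0 := by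
  have h := hZp.1
  rw [add_mulVec, hZ.1, vecMulVec_mulVec, add_eq_left, smul_eq_zero] at h
  simpa using h

theorem lass_solution_structure {N K : ℕ}
    (L : Matrix (Fin N) (Fin N) ℝ) (G : Matrix (Fin N) (Fin K) ℝ) (lam : ℝ)
    (hlam : 0 < lam) (hL : L.PosSemidef) (hL1 : L *ᵥ (1 : Fin N → ℝ) = 0)
    -- connectedness: the Laplacian quadratic form vanishes only on constant columns
    (hconn : ∀ P : Matrix (Fin N) (Fin K) ℝ, (Pᵀ * L * P).trace = 0 →
      ∃ p : Fin K → ℝ, P = Matrix.vecMulVec (1 : Fin N → ℝ) p)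
    (Zstar : Matrix (Fin N) (Fin K) ℝ)
    (hsol : LassFeasible Zstar ∧
      ∀ Z, LassFeasible Z → lassObj lam L G Zstar ≤ lassObj lam L G Z) :
    ∀ Z, (LassFeasible Z ∧
        ∀ Z', LassFeasible Z' → lassObj lam L G Z ≤ lassObj lam L G Z') →
      ∃ p : Fin K → ℝ,
        Z = Zstar + Matrix.vecMulVec (1 : Fin N → ℝ) p ∧
        p ⬝ᵥ (1 : Fin K → ℝ) = 0 ∧
        p ⬝ᵥ (Gᵀ *ᵥ (1 : Fin N → ℝ)) = 0 ∧
        (∀ n k, 0 ≤ (Zstar + Matrix.vecMulVec (1 : Fin N → ℝ) p) n k) := by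
  obtain ⟨hZstar, hZstar_min⟩ := hsol
  rintro Z ⟨hZ, hZ_min⟩
  rcases isEmpty_or_nonempty (Fin N) with _ | _
  · exact ⟨0, Subsingleton.elim _ _, zero_dotProduct _, zero_dotProduct _, isEmptyElim⟩
  obtain ⟨p, hp⟩ := hconn _ <|
    trace_quadForm_sub_eq_zero_of_minimizer hlam hL hZ hZ_min hZstar (hZstar_min Z hZ)
  have hZp : Z = Zstar + vecMulVec 1 p := by rw [← hp, add_sub_cancel]
  refine ⟨p, hZp, ?_, ?_, hZp ▸ hZ.2⟩
  · exact dotProduct_one_eq_zero_of_lassFeasible_add_vecMulVec hZstar (hZp ▸ hZ)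
  · have hshift := lassObj_add_vecMulVec_one lam
      (isHermitian_iff_isSymm.mp hL.isHermitian) hL1 G Zstar p
    rw [← hZp] at hshift
    linarith [hZ_min Zstar hZstar, hZstar_min Z hZ]
end

section
/- Let Z be a solution of the LASS problem with connected-graph Laplacian L = D − W (D the diagonal degree matrix of the nonnegative symmetric affinity matrix W with positive row sums). If row n of G is zero (g_n = 0), then the assignment row z_n equals the W-weighted average of the other rows: z_n = (Zᵀ w_n)/(1_Nᵀ w_n), where w_n is row n of W, and this Z satisfies the KKT conditions with μ_n = 0 and π_n = 0. -/
open Matrix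

/-- KKT conditions for the LASS problem. -/
def LassKKT {N K : ℕ} (lam : ℝ) (L : Matrix (Fin N) (Fin N) ℝ)
    (G Z : Matrix (Fin N) (Fin K) ℝ) (pi : Fin N → ℝ)
    (M : Matrix (Fin N) (Fin K) ℝ) : Prop :=
  (2 * lam) • (L * Z) - G - Matrix.vecMulVec pi (1 : Fin K → ℝ) - M = 0 ∧
  LassFeasible Z ∧ (∀ n k, 0 ≤ M n k) ∧ (∀ n k, M n k * Z n k = 0)

/-!
The objective is smooth and the feasible set is a product of simplices, so a minimizer satisfies
the first-order condition `0 ≤ (v - z_m) ⬝ᵥ s_m` for every point `v` of the simplex, where `s` is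
the gradient `2λ L Z - G`. Taking for `v` the vertices gives the KKT multipliers
`π_m = z_m ⬝ᵥ s_m`, `M = s - π 1ᵀ`. When `g_n = 0`, the row `s_n = 2λ d_n (z_n - a)` with `a` the
`W`-weighted mean of the rows of `Z`; `a` lies in the simplex, and taking `v = a` gives
`-2λ d_n ‖z_n - a‖² ≥ 0`, so `z_n = a`, and then `s_n = 0` forces `π_n = 0` and `M_n = 0`.
-/

open Filter Topology

lemma nonneg_of_forall_mul_add_sq_nonneg {c q : ℝ}
    (h : ∀ t : ℝ, 0 < t → t ≤ 1 → 0 ≤ c * t + q * t ^ 2) : 0 ≤ c := by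
  have hlim : Tendsto (fun t : ℝ => c + q * t) (𝓝[>] 0) (𝓝 c) := by
    have : Continuous (fun t : ℝ => c + q * t) := by fun_prop
    simpa using (this.tendsto 0).mono_left nhdsWithin_le_nhds
  refine ge_of_tendsto hlim ?_
  filter_upwards [Ioo_mem_nhdsGT (zero_lt_one' ℝ)] with t ⟨ht0, ht1⟩
  have := h t ht0 ht1.le
  nlinarith

lemma trace_transpose_vecMulVec_single_mul {R m n : Type*} [CommSemiring R] [Fintype m]
    [Fintype n] [DecidableEq m] (i : m) (d : n → R) (A : Matrix m n R) :
    ((vecMulVec (Pi.single i 1) d)ᵀ * A).trace = d ⬝ᵥ A i := by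
  simp [Matrix.trace, Matrix.mul_apply, vecMulVec_apply, Pi.single_apply, dotProduct, mul_comm]

lemma LassFeasible.sum_row {N K : ℕ} {Z : Matrix (Fin N) (Fin K) ℝ} (hZ : LassFeasible Z)
    (m : Fin N) : ∑ k, Z m k = 1 := by
  simpa [mulVec, dotProduct] using congrFun hZ.1 m

lemma LassFeasible.add_smul_vecMulVec_single {N K : ℕ} {Z : Matrix (Fin N) (Fin K) ℝ}
    (hZ : LassFeasible Z) (m : Fin N) {v : Fin K → ℝ} (hv1 : ∑ k, v k = 1)
    (hv0 : 0 ≤ v) {t : ℝ} (ht0 : 0 ≤ t) (ht1 : t ≤ 1) :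
    LassFeasible (Z + t • vecMulVec (Pi.single m 1) (v - Z m)) := by
  refine ⟨funext fun j => ?_, fun j k => ?_⟩
  · have hrow : ∑ k, (v - Z m) k = 0 := by
      simp [Finset.sum_sub_distrib, hv1, hZ.sum_row m]
    simp only [mulVec, dotProduct, Matrix.add_apply, Matrix.smul_apply, vecMulVec_apply,
      smul_eq_mul, Pi.one_apply, mul_one, Finset.sum_add_distrib, ← Finset.mul_sum, hrow,
      hZ.sum_row j, mul_zero, add_zero]
  · rcases eq_or_ne j m with rfl | hjm
    · have hZjk := hZ.2 j k
      have hvk : 0 ≤ v k := hv0 k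
      simp only [Matrix.add_apply, Matrix.smul_apply, vecMulVec_apply, Pi.single_eq_same,
        Pi.sub_apply, smul_eq_mul, one_mul]
      nlinarith
    · simpa [vecMulVec_apply, Pi.single_eq_of_ne hjm] using hZ.2 j k

/-- The gradient of `lassObj lam L G` at `Z` when `L` is symmetric. -/
def lassGrad {N K : ℕ} (lam : ℝ) (L : Matrix (Fin N) (Fin N) ℝ)
    (G Z : Matrix (Fin N) (Fin K) ℝ) : Matrix (Fin N) (Fin K) ℝ :=
  (2 * lam) • (L * Z) - G

lemma lassObj_add_smul {N K : ℕ} (lam : ℝ) {L : Matrix (Fin N) (Fin N) ℝ} (hL : Lᵀ = L)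
    (G Z E : Matrix (Fin N) (Fin K) ℝ) (t : ℝ) :
    lassObj lam L G (Z + t • E) = lassObj lam L G Z
      + t * (Eᵀ * lassGrad lam L G Z).trace + t ^ 2 * (lam * (Eᵀ * L * E).trace) := by
  have hLZ : (Zᵀ * (L * E)).trace = (Eᵀ * (L * Z)).trace := by
    rw [← trace_transpose, transpose_mul, transpose_mul, transpose_transpose, hL,
      Matrix.mul_assoc]
  have hG : (Gᵀ * E).trace = (Eᵀ * G).trace := by
    rw [← trace_transpose (Gᵀ * E), transpose_mul, transpose_transpose]
  simp only [lassObj, lassGrad, transpose_add, transpose_smul, Matrix.add_mul, Matrix.mul_add,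
    Matrix.smul_mul, Matrix.mul_smul, Matrix.mul_sub, Matrix.mul_assoc, trace_add, trace_sub,
    trace_smul, smul_eq_mul]
  rw [hLZ, hG]
  ring

section Optimality

variable {N K : ℕ} {lam : ℝ} {L : Matrix (Fin N) (Fin N) ℝ} {G Z : Matrix (Fin N) (Fin K) ℝ}

/-- `(v - Z m) ⬝ᵥ lassGrad lam L G Z m` is the derivative of the objective along the feasible
segment that moves row `m` of `Z` towards the point `v` of the simplex. -/
theorem lass_first_order (hL : Lᵀ = L) (hZ : LassFeasible Z)
    (hmin : IsMinOn (lassObj lam L G) {Z' | LassFeasible Z'} Z) (m : Fin N) {v : Fin K → ℝ}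
    (hv1 : ∑ k, v k = 1) (hv0 : 0 ≤ v) :
    0 ≤ (v - Z m) ⬝ᵥ lassGrad lam L G Z m := by
  set E := vecMulVec (Pi.single m 1) (v - Z m)
  refine nonneg_of_forall_mul_add_sq_nonneg (q := lam * (Eᵀ * L * E).trace) fun t ht0 ht1 => ?_
  have hle := isMinOn_iff.mp hmin _ (hZ.add_smul_vecMulVec_single m hv1 hv0 ht0.le ht1)
  rw [lassObj_add_smul lam hL, trace_transpose_vecMulVec_single_mul] at hle
  linarith

theorem lassKKT_of_isMinOn (hL : Lᵀ = L) (hZ : LassFeasible Z)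
    (hmin : IsMinOn (lassObj lam L G) {Z' | LassFeasible Z'} Z) :
    LassKKT lam L G Z (fun m => Z m ⬝ᵥ lassGrad lam L G Z m)
      (lassGrad lam L G Z - vecMulVec (fun m => Z m ⬝ᵥ lassGrad lam L G Z m) 1) := by
  set S := lassGrad lam L G Z
  have hM : ∀ m k, 0 ≤ S m k - Z m ⬝ᵥ S m := fun m k => by
    simpa [sub_dotProduct, single_dotProduct] using lass_first_order hL hZ hmin m
      (v := Pi.single k 1) (by simp) (Pi.single_nonneg.2 zero_le_one)
  refine ⟨sub_self _, hZ, fun m k => by simpa [vecMulVec_apply] using hM m k, fun m k => ?_⟩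
  have hsum : ∑ k, (S m k - Z m ⬝ᵥ S m) * Z m k = 0 := by
    simp only [sub_mul, Finset.sum_sub_distrib, ← Finset.mul_sum, hZ.sum_row m, mul_one]
    exact sub_eq_zero.2 (dotProduct_comm _ _).symm
  simpa [vecMulVec_apply] using (Finset.sum_eq_zero_iff_of_nonneg fun k _ =>
    mul_nonneg (hM m k) (hZ.2 m k)).1 hsum k (Finset.mem_univ k)

end Optimality

section Laplacian

variable {ι κ : Type*} [Fintype ι]

noncomputable def neighborMean (W : Matrix ι ι ℝ) (Z : Matrix ι κ ℝ) (i : ι) : κ → ℝ :=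
  fun k => (∑ j, W i j * Z j k) / ∑ j, W i j

lemma neighborMean_nonneg {W : Matrix ι ι ℝ} {Z : Matrix ι κ ℝ} (hW : ∀ i j, 0 ≤ W i j)
    (hZ : ∀ i k, 0 ≤ Z i k) (i : ι) : 0 ≤ neighborMean W Z i := fun k =>
  div_nonneg (Finset.sum_nonneg fun j _ => mul_nonneg (hW i j) (hZ j k))
    (Finset.sum_nonneg fun j _ => hW i j)

lemma sum_neighborMean [Fintype κ] {W : Matrix ι ι ℝ} {Z : Matrix ι κ ℝ}
    (hZ : ∀ j, ∑ k, Z j k = 1) {i : ι} (hi : ∑ j, W i j ≠ 0) :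
    ∑ k, neighborMean W Z i k = 1 := by
  simp only [neighborMean, ← Finset.sum_div]
  rw [Finset.sum_comm]
  simp only [← Finset.mul_sum, hZ, mul_one]
  exact div_self hi

lemma laplacian_mul_apply [DecidableEq ι] (W : Matrix ι ι ℝ) (Z : Matrix ι κ ℝ) {i : ι}
    (hi : ∑ j, W i j ≠ 0) (k : κ) :
    ((diagonal (W *ᵥ 1) - W) * Z) i k = (∑ j, W i j) * (Z i k - neighborMean W Z i k) := by
  rw [Matrix.sub_mul, Matrix.sub_apply, diagonal_mul, Matrix.mul_apply, mul_sub, neighborMean,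
    mul_div_cancel₀ _ hi]
  simp [mulVec, dotProduct]

end Laplacian

theorem lass_row_eq_neighborMean {N K : ℕ} {W L : Matrix (Fin N) (Fin N) ℝ}
    (hW : ∀ i j, 0 ≤ W i j) (hL : Lᵀ = L) (hLdef : L = diagonal (W *ᵥ 1) - W)
    {G Z : Matrix (Fin N) (Fin K) ℝ} {lam : ℝ} (hlam : 0 < lam) (hZ : LassFeasible Z)
    (hmin : IsMinOn (lassObj lam L G) {Z' | LassFeasible Z'} Z) {n : Fin N}
    (hn : 0 < ∑ j, W n j) (hGn : ∀ k, G n k = 0) :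
    Z n = neighborMean W Z n ∧ lassGrad lam L G Z n = 0 := by
  set a := neighborMean W Z n
  have hgrad : lassGrad lam L G Z n = (2 * lam * ∑ j, W n j) • (Z n - a) := by
    ext k
    rw [lassGrad, Matrix.sub_apply, hGn, sub_zero, Matrix.smul_apply, hLdef,
      laplacian_mul_apply W Z hn.ne', Pi.smul_apply, Pi.sub_apply, smul_eq_mul, smul_eq_mul]
    ring
  have hfirst := lass_first_order hL hZ hmin n (sum_neighborMean hZ.sum_row hn.ne')
    (neighborMean_nonneg hW hZ.2 n)
  rw [hgrad, dotProduct_smul, ← neg_sub, neg_dotProduct, smul_eq_mul, mul_neg,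
    neg_nonneg] at hfirst
  have hsq : (Z n - a) ⬝ᵥ (Z n - a) = 0 :=
    le_antisymm (nonpos_of_mul_nonpos_right hfirst (by positivity)) (dotProduct_self_star_nonneg _)
  have hrow : Z n = a := sub_eq_zero.1 (dotProduct_self_eq_zero.1 hsq)
  exact ⟨hrow, by rw [hgrad, hrow, sub_self, smul_zero]⟩

theorem lass_zero_similarity_row_general {N K : ℕ}
    (W : Matrix (Fin N) (Fin N) ℝ) (hWsym : W.IsSymm) (hWpos : ∀ n m, 0 ≤ W n m)
    (hWrow : ∀ n, 0 < ∑ m, W n m)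
    (L : Matrix (Fin N) (Fin N) ℝ)
    (hLdef : L = Matrix.diagonal (W *ᵥ (1 : Fin N → ℝ)) - W)
    (G : Matrix (Fin N) (Fin K) ℝ) (lam : ℝ) (hlam : 0 < lam)
    (Z : Matrix (Fin N) (Fin K) ℝ)
    (hsol : LassFeasible Z ∧
      ∀ Z', LassFeasible Z' → lassObj lam L G Z ≤ lassObj lam L G Z')
    (n : Fin N) (hGn : ∀ k, G n k = 0) :
    (∀ k, Z n k = (∑ m, W n m * Z m k) / (∑ m, W n m)) ∧
    ∃ (pi : Fin N → ℝ) (M : Matrix (Fin N) (Fin K) ℝ),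
      LassKKT lam L G Z pi M ∧ (∀ k, M n k = 0) ∧ pi n = 0 := by
  obtain ⟨hZ, hmin⟩ := hsol
  replace hmin : IsMinOn (lassObj lam L G) {Z' | LassFeasible Z'} Z := isMinOn_iff.2 hmin
  have hL : Lᵀ = L := by rw [hLdef, transpose_sub, diagonal_transpose, hWsym.eq]
  obtain ⟨hrow, hgrad⟩ :=
    lass_row_eq_neighborMean hWpos hL hLdef hlam hZ hmin (hWrow n) hGn
  exact ⟨congrFun hrow, _, _, lassKKT_of_isMinOn hL hZ hmin, by simp [hgrad], by simp [hgrad]⟩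

theorem lass_zero_similarity_row {N K : ℕ}
    (W : Matrix (Fin N) (Fin N) ℝ) (hWsym : W.IsSymm) (hWpos : ∀ n m, 0 ≤ W n m)
    (hWrow : ∀ n, 0 < ∑ m, W n m)
    (L : Matrix (Fin N) (Fin N) ℝ)
    (hLdef : L = Matrix.diagonal (W *ᵥ (1 : Fin N → ℝ)) - W)
    -- connectedness: the Laplacian quadratic form vanishes only on constant columns
    (hconn : ∀ P : Matrix (Fin N) (Fin K) ℝ, (Pᵀ * L * P).trace = 0 →
      ∃ p : Fin K → ℝ, P = Matrix.vecMulVec (1 : Fin N → ℝ) p)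
    (G : Matrix (Fin N) (Fin K) ℝ) (lam : ℝ) (hlam : 0 < lam)
    (Z : Matrix (Fin N) (Fin K) ℝ)
    (hsol : LassFeasible Z ∧
      ∀ Z', LassFeasible Z' → lassObj lam L G Z ≤ lassObj lam L G Z')
    (n : Fin N) (hGn : ∀ k, G n k = 0) :
    (∀ k, Z n k = (∑ m, W n m * Z m k) / (∑ m, W n m)) ∧
    ∃ (pi : Fin N → ℝ) (M : Matrix (Fin N) (Fin K) ℝ),
      LassKKT lam L G Z pi M ∧ (∀ k, M n k = 0) ∧ pi n = 0 :=
  lass_zero_similarity_row_general W hWsym hWpos hWrow L hLdef G lam hlam Z hsol n hGn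
end

section
/- For the ADMM iteration for LASS: ν ← (ρ/K)(Y − U)1_K − h with h = −(1/K)G 1_K + (ρ/K)1_N; Z ← (2λL + ρI)^{-1}(ρ(Y − U) + G − ν 1_Kᵀ); Y ← (Z + U)_+; U ← U + Z − Y. After each full iteration, the iterate Z satisfies Z 1_K = 1_N exactly. -/
/-!
The ν-update is exactly the per-row correction that makes the right-hand side
`ρ(Y - U) + G - ν 1ᵀ` have all row sums equal to `ρ`. Since `L 1 = 0`, the vector `1` is an
eigenvector of `2λL + ρI` for the eigenvalue `ρ`, and this matrix is positive definite, so its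
inverse sends `ρ 1` back to `1`.
-/

open Matrix

variable {m n : Type*}

lemma Matrix.PosSemidef.posDef_smul_add_smul_one [DecidableEq n] {L : Matrix n n ℝ}
    (hL : L.PosSemidef) {a b : ℝ} (ha : 0 ≤ a) (hb : 0 < b) :
    (a • L + b • (1 : Matrix n n ℝ)).PosDef :=
  PosDef.posSemidef_add (hL.smul ha) (PosDef.one.smul hb)

lemma smul_add_smul_one_mulVec_of_mulVec_eq_zero [Fintype n] [DecidableEq n] {L : Matrix n n ℝ}
    {v : n → ℝ} (hLv : L *ᵥ v = 0) (a b : ℝ) :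
    (a • L + b • (1 : Matrix n n ℝ)) *ᵥ v = b • v := by
  rw [add_mulVec, smul_mulVec, smul_mulVec, hLv, one_mulVec, smul_zero, zero_add]

lemma vecMulVec_one_mulVec_one [Fintype n] (u : m → ℝ) :
    vecMulVec u (1 : n → ℝ) *ᵥ 1 = (Fintype.card n : ℝ) • u := by
  rw [vecMulVec_mulVec, op_smul_eq_smul, one_dotProduct_one]

lemma sub_vecMulVec_mulVec_one [Fintype n] [Nonempty n] (A : Matrix m n ℝ) (c : ℝ) :
    (A - vecMulVec ((Fintype.card n : ℝ)⁻¹ • (A *ᵥ 1 - c • 1)) 1) *ᵥ 1 = c • 1 := by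
  rw [sub_mulVec, vecMulVec_one_mulVec_one,
    smul_inv_smul₀ (Nat.cast_ne_zero.mpr Fintype.card_ne_zero), sub_sub_cancel]

theorem lass_admm_row_sums {N K : ℕ} (hK : 0 < K)
    (L : Matrix (Fin N) (Fin N) ℝ) (hL : L.PosSemidef)
    (hL1 : L *ᵥ (1 : Fin N → ℝ) = 0)
    (G : Matrix (Fin N) (Fin K) ℝ) (lam rho : ℝ) (hlam : 0 < lam) (hrho : 0 < rho)
    (Y U : Matrix (Fin N) (Fin K) ℝ)
    (h : Fin N → ℝ)
    (hh : h = -((1 : ℝ)/K) • (G *ᵥ (1 : Fin K → ℝ)) + (rho/K) • (1 : Fin N → ℝ))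
    (nu : Fin N → ℝ)
    (hnu : nu = (rho/K) • ((Y - U) *ᵥ (1 : Fin K → ℝ)) - h)
    (Z : Matrix (Fin N) (Fin K) ℝ)
    (hZ : Z = ((2 * lam) • L + rho • (1 : Matrix (Fin N) (Fin N) ℝ))⁻¹ *
      (rho • (Y - U) + G - Matrix.vecMulVec nu (1 : Fin K → ℝ))) :
    Z *ᵥ (1 : Fin K → ℝ) = (1 : Fin N → ℝ) := by
  have : Nonempty (Fin K) := Fin.pos_iff_nonempty.mp hK
  have hK0 : (K : ℝ) ≠ 0 := Nat.cast_ne_zero.mpr hK.ne'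
  have hnu_mean : nu = (Fintype.card (Fin K) : ℝ)⁻¹ • ((rho • (Y - U) + G) *ᵥ 1 - rho • 1) := by
    rw [hnu, hh, Fintype.card_fin, add_mulVec, smul_mulVec]
    ext i
    simp only [Pi.add_apply, Pi.sub_apply, Pi.smul_apply, Pi.one_apply, smul_eq_mul]
    field_simp
    ring
  have hM : ((2 * lam) • L + rho • (1 : Matrix (Fin N) (Fin N) ℝ)).PosDef :=
    hL.posDef_smul_add_smul_one (by positivity) hrho
  have := hM.isUnit.invertible
  rw [hZ, ← mulVec_mulVec, hnu_mean, sub_vecMulVec_mulVec_one]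
  exact inv_mulVec_eq_vec (smul_add_smul_one_mulVec_of_mulVec_eq_zero hL1 _ _).symm
end

section
/- Any fixed point of the ADMM iteration for LASS yields a KKT point: if (Z, Y, U, ν) satisfies ν = (ρ/K)(Y−U)1_K − h, Z = (2λL + ρI)^{-1}(ρ(Y−U) + G − ν1_Kᵀ), Y = (Z+U)_+, and U = U + Z − Y (so Z = Y), then Z with multipliers π = −ν and M = −ρU satisfies the KKT conditions: 2λLZ − G − π1_Kᵀ − M = 0, Z1_K = 1_N, Z ≥ 0, M ≥ 0, M ∘ Z = 0. -/
/-!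
At a fixed point the dual update forces `Z = Y`, so `Z = (Z + U)₊` entrywise; this is exactly
`Z ≥ 0`, `U ≤ 0`, `U ∘ Z = 0`, i.e. the sign and complementarity conditions for `M = -ρU`.
Multiplying the `Z`-update by the positive definite matrix `A = 2λL + ρI` gives stationarity.
For the row sums, `L1 = 0` gives `A1 = ρ1`, and the choice of `ν` makes the right-hand side of
the `Z`-update have row sums `ρ1` as well, so `AZ1 = A1` and `Z1 = 1` by invertibility of `A`.
-/

open Matrix

theorem nonneg_and_complementary_of_eq_max_add_zero {α : Type*} [Ring α] [LinearOrder α]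
    [IsOrderedRing α] {z u : α} (h : z = max (z + u) 0) : 0 ≤ z ∧ u ≤ 0 ∧ u * z = 0 := by
  rcases le_total (z + u) 0 with hneg | hpos
  · have hz : z = 0 := by rwa [max_eq_right hneg] at h
    subst hz
    exact ⟨le_rfl, by simpa using hneg, mul_zero u⟩
  · have hu : u = 0 := by rw [max_eq_left hpos] at h; simpa using h.symm
    subst hu
    exact ⟨by simpa using hpos, le_rfl, zero_mul z⟩

namespace Matrix

theorem PosSemidef.smul_add_smul_one_posDef {m : Type*} [DecidableEq m] {A : Matrix m m ℝ}
    (hA : A.PosSemidef) {a b : ℝ} (ha : 0 ≤ a) (hb : 0 < b) :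
    (a • A + b • (1 : Matrix m m ℝ)).PosDef :=
  PosDef.posSemidef_add (hA.smul ha) (PosDef.one.smul hb)

theorem mulVec_eq_of_mul_eq {m n K : Type*} [Fintype m] [DecidableEq m] [Fintype n] [Field K]
    {A : Matrix m m K} {B Z : Matrix m n K} {v : n → K} {w : m → K}
    (hA : IsUnit A) (hAZ : A * Z = B) (h : B *ᵥ v = A *ᵥ w) : Z *ᵥ v = w :=
  mulVec_injective_iff_isUnit.mpr hA <| by rw [mulVec_mulVec, hAZ, h]

end Matrix

theorem admm_rhs_mulVec_one {m n K : Type*} [Fintype n] [Field K]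
    (hn : (Fintype.card n : K) ≠ 0) (M G : Matrix m n K) (ρ : K) {ν h : m → K}
    (hh : h = -(1 / (Fintype.card n : K)) • (G *ᵥ 1) + (ρ / Fintype.card n) • 1)
    (hν : ν = (ρ / Fintype.card n) • (M *ᵥ 1) - h) :
    (ρ • M + G - vecMulVec ν 1) *ᵥ 1 = ρ • 1 := by
  rw [sub_mulVec, add_mulVec, smul_mulVec, vecMulVec_mulVec, one_dotProduct_one]
  ext i
  simp only [hν, hh, Pi.add_apply, Pi.sub_apply, Pi.smul_apply, Pi.one_apply,
    smul_eq_mul, op_smul_eq_mul, mul_one]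
  field_simp
  ring

theorem lass_admm_fixed_point_is_kkt {N K : ℕ} (hK : 0 < K)
    (L : Matrix (Fin N) (Fin N) ℝ) (hL : L.PosSemidef)
    (hL1 : L *ᵥ (1 : Fin N → ℝ) = 0)
    (G : Matrix (Fin N) (Fin K) ℝ) (lam rho : ℝ) (hlam : 0 < lam) (hrho : 0 < rho)
    (Z Y U : Matrix (Fin N) (Fin K) ℝ) (nu : Fin N → ℝ) (h : Fin N → ℝ)
    (hh : h = -((1 : ℝ)/K) • (G *ᵥ (1 : Fin K → ℝ)) + (rho/K) • (1 : Fin N → ℝ))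
    (hnu : nu = (rho/K) • ((Y - U) *ᵥ (1 : Fin K → ℝ)) - h)
    (hZ : Z = ((2 * lam) • L + rho • (1 : Matrix (Fin N) (Fin N) ℝ))⁻¹ *
      (rho • (Y - U) + G - Matrix.vecMulVec nu (1 : Fin K → ℝ)))
    (hYfix : ∀ n k, Y n k = max (Z n k + U n k) 0)
    (hUfix : U = U + Z - Y) :
    ((2 * lam) • (L * Z) - G - Matrix.vecMulVec (-nu) (1 : Fin K → ℝ)
        - (-rho) • U = 0) ∧
    Z *ᵥ (1 : Fin K → ℝ) = (1 : Fin N → ℝ) ∧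
    (∀ n k, 0 ≤ Z n k) ∧
    (∀ n k, 0 ≤ ((-rho) • U) n k) ∧
    (∀ n k, ((-rho) • U) n k * Z n k = 0) := by
  obtain rfl : Z = Y := sub_eq_zero.mp (left_eq_add.mp (hUfix.trans (add_sub_assoc U Z Y)))
  have hcompl n k := nonneg_and_complementary_of_eq_max_add_zero (hYfix n k)
  set A := (2 * lam) • L + rho • (1 : Matrix (Fin N) (Fin N) ℝ)
  have hA : IsUnit A := (hL.smul_add_smul_one_posDef (by positivity) hrho).isUnit
  have hAZ : A * Z = rho • (Z - U) + G - vecMulVec nu 1 := by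
    conv_lhs => rw [hZ]
    exact mul_nonsing_inv_cancel_left _ _ ((isUnit_iff_isUnit_det A).mp hA)
  have hA1 : A *ᵥ 1 = rho • 1 := by
    rw [add_mulVec, smul_mulVec, smul_mulVec, hL1, one_mulVec, smul_zero, zero_add]
  refine ⟨?_, ?_, fun n k => (hcompl n k).1, fun n k => ?_, fun n k => ?_⟩
  · rw [Matrix.add_mul, Matrix.smul_mul, Matrix.smul_mul, Matrix.one_mul] at hAZ
    rw [neg_vecMulVec]
    linear_combination (norm := module) hAZ
  · refine mulVec_eq_of_mul_eq hA hAZ ?_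
    rw [hA1]
    exact admm_rhs_mulVec_one (by simpa using hK.ne') _ G rho (by simpa only [Fintype.card_fin])
      (by simpa only [Fintype.card_fin])
  · simpa using mul_nonneg_of_nonpos_of_nonpos (neg_nonpos.mpr hrho.le) (hcompl n k).2.1
  · simp [mul_assoc, (hcompl n k).2.2]
end

section
/- Under the conditions of the SSL label propagation (connected graph, L_u invertible, Z_l ≥ 0 with rows summing to 1), the propagated labels Z_u = −L_u^{-1} L_{ul} Z_l also satisfy Z_u ≥ 0 entrywise (maximum principle for harmonic functions on a graph). -/
open Matrix

/-!
Fix a column `k` and let `x` be the vector of labels in that column on all vertices. It is harmonic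
on the unlabeled vertices and nonnegative on the labeled ones. Its negative part `v = x⁻` then
satisfies `vᵀ L v = vᵀ L x⁺ - vᵀ L x ≤ 0`: the first term is `½ ∑ wᵢⱼ (vᵢ - vⱼ)(x⁺ᵢ - x⁺ⱼ)` with
factors of opposite signs, and the second vanishes because `v` is supported where `x` is harmonic.
By connectedness `v` is constant, and it vanishes at a labeled vertex.
-/

lemma negPart_sub_mul_posPart_sub_nonpos {α : Type*} [Ring α] [LinearOrder α] [IsOrderedRing α]
    (a b : α) : (a⁻ - b⁻) * (a⁺ - b⁺) ≤ 0 := by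
  rcases le_total a b with h | h
  · exact mul_nonpos_of_nonneg_of_nonpos (sub_nonneg.2 (negPart_anti h))
      (sub_nonpos.2 (posPart_mono h))
  · exact mul_nonpos_of_nonpos_of_nonneg (sub_nonpos.2 (negPart_anti h))
      (sub_nonneg.2 (posPart_mono h))

namespace Matrix

variable {n : Type*} [Fintype n] [DecidableEq n]

noncomputable def weightedLaplacian (W : Matrix n n ℝ) : Matrix n n ℝ :=
  diagonal (W *ᵥ 1) - W

lemma dotProduct_weightedLaplacian_mulVec (W : Matrix n n ℝ) (a b : n → ℝ) :
    a ⬝ᵥ (weightedLaplacian W *ᵥ b) = ∑ i, ∑ j, W i j * a i * (b i - b j) := by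
  rw [weightedLaplacian, sub_mulVec, dotProduct_sub, funext (mulVec_diagonal (W *ᵥ 1) b)]
  simp only [dotProduct, mulVec, Pi.one_apply, mul_one, Finset.mul_sum, Finset.sum_mul,
    ← Finset.sum_sub_distrib]
  exact Finset.sum_congr rfl fun i _ => Finset.sum_congr rfl fun j _ => by ring

lemma two_mul_dotProduct_weightedLaplacian_mulVec {W : Matrix n n ℝ} (hW : W.IsSymm)
    (a b : n → ℝ) :
    2 * (a ⬝ᵥ (weightedLaplacian W *ᵥ b)) = ∑ i, ∑ j, W i j * (a i - a j) * (b i - b j) := by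
  have swapped : a ⬝ᵥ (weightedLaplacian W *ᵥ b) = ∑ i, ∑ j, W i j * a j * (b j - b i) := by
    rw [dotProduct_weightedLaplacian_mulVec, Finset.sum_comm]
    simp only [hW.apply]
  rw [two_mul]
  nth_rewrite 1 [dotProduct_weightedLaplacian_mulVec]
  rw [swapped, ← Finset.sum_add_distrib]
  refine Finset.sum_congr rfl fun i _ => ?_
  rw [← Finset.sum_add_distrib]
  exact Finset.sum_congr rfl fun j _ => by ring

lemma dotProduct_weightedLaplacian_mulVec_self_nonneg {W : Matrix n n ℝ} (hW : W.IsSymm)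
    (hWnonneg : ∀ i j, 0 ≤ W i j) (v : n → ℝ) :
    0 ≤ v ⬝ᵥ (weightedLaplacian W *ᵥ v) := by
  have h := two_mul_dotProduct_weightedLaplacian_mulVec hW v v
  have : 0 ≤ ∑ i, ∑ j, W i j * (v i - v j) * (v i - v j) :=
    Finset.sum_nonneg fun i _ => Finset.sum_nonneg fun j _ => by
      rw [mul_assoc]; exact mul_nonneg (hWnonneg i j) (mul_self_nonneg _)
  linarith

lemma negPart_dotProduct_weightedLaplacian_mulVec_posPart_nonpos {W : Matrix n n ℝ}
    (hW : W.IsSymm) (hWnonneg : ∀ i j, 0 ≤ W i j) (x : n → ℝ) :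
    x⁻ ⬝ᵥ (weightedLaplacian W *ᵥ x⁺) ≤ 0 := by
  have h := two_mul_dotProduct_weightedLaplacian_mulVec hW x⁻ x⁺
  have : ∑ i, ∑ j, W i j * (x⁻ i - x⁻ j) * (x⁺ i - x⁺ j) ≤ 0 :=
    Finset.sum_nonpos fun i _ => Finset.sum_nonpos fun j _ => by
      rw [mul_assoc]
      exact mul_nonpos_of_nonneg_of_nonpos (hWnonneg i j)
        (negPart_sub_mul_posPart_sub_nonpos (x i) (x j))
  linarith

theorem nonneg_of_harmonic_where_neg {W : Matrix n n ℝ} (hW : W.IsSymm)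
    (hWnonneg : ∀ i j, 0 ≤ W i j)
    (hconn : ∀ v : n → ℝ, v ⬝ᵥ (weightedLaplacian W *ᵥ v) = 0 → ∃ c : ℝ, v = fun _ => c)
    {x : n → ℝ} (hharm : ∀ i, x i < 0 → (weightedLaplacian W *ᵥ x) i = 0)
    {j : n} (hj : 0 ≤ x j) : 0 ≤ x := by
  set L := weightedLaplacian W
  have support_harmonic : x⁻ ⬝ᵥ (L *ᵥ x) = 0 := by
    refine Finset.sum_eq_zero fun i _ => ?_
    rcases lt_or_ge (x i) 0 with hneg | hnonneg
    · rw [hharm i hneg, mul_zero]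
    · rw [Pi.negPart_apply, negPart_eq_zero.2 hnonneg, zero_mul]
  have form_nonpos : x⁻ ⬝ᵥ (L *ᵥ x⁻) ≤ 0 := by
    have hsplit : x⁻ = x⁺ - x :=
      eq_sub_of_add_eq (sub_eq_iff_eq_add'.1 (posPart_sub_negPart x)).symm
    nth_rewrite 2 [hsplit]
    rw [mulVec_sub, dotProduct_sub, support_harmonic, sub_zero]
    exact negPart_dotProduct_weightedLaplacian_mulVec_posPart_nonpos hW hWnonneg x
  obtain ⟨c, hc⟩ := hconn x⁻ (le_antisymm form_nonpos
    (dotProduct_weightedLaplacian_mulVec_self_nonneg hW hWnonneg _))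
  have hc0 : c = 0 := by
    rw [← congrFun hc j, Pi.negPart_apply, negPart_eq_zero.2 hj]
  intro i
  exact negPart_eq_zero.1 (by rw [← Pi.negPart_apply, hc, hc0])

end Matrix

theorem ssl_propagation_nonneg_general {Nu Nl K : ℕ}
    (W : Matrix (Fin Nu ⊕ Fin Nl) (Fin Nu ⊕ Fin Nl) ℝ)
    (hWsym : W.IsSymm) (hWpos : ∀ i j, 0 ≤ W i j)
    (L : Matrix (Fin Nu ⊕ Fin Nl) (Fin Nu ⊕ Fin Nl) ℝ)
    (hL : L = Matrix.diagonal (W *ᵥ (1 : Fin Nu ⊕ Fin Nl → ℝ)) - W)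
    -- connectedness: the Laplacian quadratic form vanishes only on constant vectors
    (hconn : ∀ v : Fin Nu ⊕ Fin Nl → ℝ, v ⬝ᵥ (L *ᵥ v) = 0 → ∃ c : ℝ, v = fun _ => c)
    (Lu : Matrix (Fin Nu) (Fin Nu) ℝ) (hLu : Lu = L.toBlocks₁₁)
    (Lul : Matrix (Fin Nu) (Fin Nl) ℝ) (hLul : Lul = L.toBlocks₁₂)
    (hLuInv : IsUnit Lu.det)
    (Zl : Matrix (Fin Nl) (Fin K) ℝ)
    (hZlpos : ∀ i k, 0 ≤ Zl i k)
    (Zu : Matrix (Fin Nu) (Fin K) ℝ)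
    (hZu : Zu = -(Lu⁻¹ * Lul * Zl)) :
    ∀ i k, 0 ≤ Zu i k := by
  intro i k
  rcases isEmpty_or_nonempty (Fin Nl) with hempty | ⟨⟨l₀⟩⟩
  · have : Lul * Zl = 0 := by ext; simp [Matrix.mul_apply]
    simp [hZu, Matrix.mul_assoc, this]
  have hLuZu : Lu * Zu + Lul * Zl = 0 := by
    rw [hZu, Matrix.mul_assoc Lu⁻¹, Matrix.mul_neg, Matrix.mul_nonsing_inv_cancel_left _ _ hLuInv,
      neg_add_cancel]
  obtain rfl : L = weightedLaplacian W := hL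
  let x : Fin Nu ⊕ Fin Nl → ℝ := Sum.elim (Zu · k) (Zl · k)
  have hharm (u : Fin Nu) : (weightedLaplacian W *ᵥ x) (.inl u) = 0 := by
    rw [← fromBlocks_toBlocks (weightedLaplacian W), fromBlocks_mulVec, Sum.elim_inl, ← hLu, ← hLul]
    exact congrFun (congrFun hLuZu u) k
  have hx := nonneg_of_harmonic_where_neg hWsym hWpos hconn (x := x)
    (fun | .inl u, _ => hharm u | .inr l, hneg => absurd (hZlpos l k) hneg.not_ge)
    (j := .inr l₀) (hZlpos l₀ k)
  exact hx (.inl i)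

theorem ssl_propagation_nonneg {Nu Nl K : ℕ}
    (W : Matrix (Fin Nu ⊕ Fin Nl) (Fin Nu ⊕ Fin Nl) ℝ)
    (hWsym : W.IsSymm) (hWpos : ∀ i j, 0 ≤ W i j)
    (L : Matrix (Fin Nu ⊕ Fin Nl) (Fin Nu ⊕ Fin Nl) ℝ)
    (hL : L = Matrix.diagonal (W *ᵥ (1 : Fin Nu ⊕ Fin Nl → ℝ)) - W)
    -- connectedness: the Laplacian quadratic form vanishes only on constant vectors
    (hconn : ∀ v : Fin Nu ⊕ Fin Nl → ℝ, v ⬝ᵥ (L *ᵥ v) = 0 → ∃ c : ℝ, v = fun _ => c)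
    (Lu : Matrix (Fin Nu) (Fin Nu) ℝ) (hLu : Lu = L.toBlocks₁₁)
    (Lul : Matrix (Fin Nu) (Fin Nl) ℝ) (hLul : Lul = L.toBlocks₁₂)
    (hLuInv : IsUnit Lu.det)
    (Zl : Matrix (Fin Nl) (Fin K) ℝ)
    (hZlpos : ∀ i k, 0 ≤ Zl i k)
    (hZlsum : Zl *ᵥ (1 : Fin K → ℝ) = (1 : Fin Nl → ℝ))
    (Zu : Matrix (Fin Nu) (Fin K) ℝ)
    (hZu : Zu = -(Lu⁻¹ * Lul * Zl)) :
    ∀ i k, 0 ≤ Zu i k :=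
  ssl_propagation_nonneg_general W hWsym hWpos L hL hconn Lu hLu Lul hLul hLuInv Zl hZlpos Zu hZu
end

section
/- If g ∈ ℝ^K has maximum entry g_max attained at a unique index k_max, then the Euclidean projection onto the probability simplex of z̄ + γg converges, as γ → ∞, to the vertex e_{k_max} of the simplex, for any fixed z̄ ∈ ℝ^K. -/
open Matrix Filter Topology

/-- The probability simplex in `EuclideanSpace ℝ (Fin K)`. -/
def probSimplex (K : ℕ) : Set (EuclideanSpace ℝ (Fin K)) :=
  {z | (∀ k, 0 ≤ z k) ∧ ∑ k, z k = 1}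

/-!
Write `x = z̄ + γ g`, `p = Π(x)` and `e = e_{k_max}`. Comparing `p` with the competitor `e` in the
projection problem gives `2 ⟪e - p, x⟫ ≤ ‖e‖² - ‖p‖² ≤ 1`. If `δ > 0` is the gap between `g_max`
and the other entries of `g`, then on the simplex `⟪e - p, g⟫ ≥ δ ⟪e - p, e⟫ ≥ δ ‖p - e‖² / 2`,
while `⟪e - p, z̄⟫ ≥ -2 ‖z̄‖`. Hence `γ δ ‖p - e‖² ≤ 1 + 4 ‖z̄‖`, and `p → e` as `γ → ∞`.
-/

open RealInnerProductSpace

lemma exists_pos_le_of_forall_pos {ι : Type*} [Finite ι] {f : ι → ℝ} (hf : ∀ i, 0 < f i) :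
    ∃ δ > 0, ∀ i, δ ≤ f i := by
  cases isEmpty_or_nonempty ι
  · exact ⟨1, one_pos, isEmptyElim⟩
  · obtain ⟨i, hi⟩ := Finite.exists_min f
    exact ⟨f i, hf i, hi⟩

section InnerProductSpace

variable {E : Type*} [NormedAddCommGroup E] [InnerProductSpace ℝ E]

lemma two_inner_sub_le_of_norm_sub_le {p x y : E} (h : ‖p - x‖ ≤ ‖y - x‖) :
    2 * ⟪y - p, x⟫ ≤ ‖y‖ ^ 2 - ‖p‖ ^ 2 := by
  have hsq := pow_le_pow_left₀ (norm_nonneg _) h 2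
  rw [norm_sub_sq_real, norm_sub_sq_real] at hsq
  rw [inner_sub_left]
  linarith

lemma norm_sub_sq_le_two_inner_of_norm_le {p e : E} (h : ‖p‖ ≤ ‖e‖) :
    ‖p - e‖ ^ 2 ≤ 2 * ⟪e - p, e⟫ := by
  rw [norm_sub_sq_real, inner_sub_left, real_inner_self_eq_norm_sq, real_inner_comm]
  nlinarith [norm_nonneg p]

end InnerProductSpace

namespace probSimplex

variable {K : ℕ} {p : EuclideanSpace ℝ (Fin K)}

lemma single_mem (k : Fin K) : EuclideanSpace.single k (1 : ℝ) ∈ probSimplex K :=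
  ⟨fun j => by by_cases h : j = k <;> simp [h], by simp⟩

lemma le_one (hp : p ∈ probSimplex K) (k : Fin K) : p k ≤ 1 :=
  hp.2 ▸ Finset.single_le_sum (fun j _ => hp.1 j) (Finset.mem_univ k)

lemma norm_le_one (hp : p ∈ probSimplex K) : ‖p‖ ≤ 1 := by
  have hsq : ‖p‖ ^ 2 ≤ 1 := calc
    ‖p‖ ^ 2 = ∑ k, p k ^ 2 := by simp [EuclideanSpace.norm_sq_eq]
    _ ≤ ∑ k, p k := Finset.sum_le_sum fun k _ => by nlinarith [hp.1 k, le_one hp k]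
    _ = 1 := hp.2
  exact (sq_le_one_iff₀ (norm_nonneg p)).1 hsq

lemma inner_le_of_forall_le (hp : p ∈ probSimplex K) {h : EuclideanSpace ℝ (Fin K)} {k : Fin K}
    (hk : ∀ j, h j ≤ h k) : ⟪p, h⟫ ≤ h k := calc
  ⟪p, h⟫ = ∑ j, p j * h j := by simp [PiLp.inner_apply, mul_comm]
  _ ≤ ∑ j, p j * h k := Finset.sum_le_sum fun j _ => mul_le_mul_of_nonneg_left (hk j) (hp.1 j)
  _ = h k := by rw [← Finset.sum_mul, hp.2, one_mul]

lemma mul_inner_sub_single_le (hp : p ∈ probSimplex K) {g : EuclideanSpace ℝ (Fin K)}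
    {k : Fin K} {δ : ℝ} (hgap : ∀ j ≠ k, g j ≤ g k - δ) :
    δ * ⟪EuclideanSpace.single k 1 - p, EuclideanSpace.single k 1⟫ ≤
      ⟪EuclideanSpace.single k 1 - p, g⟫ := by
  set e : EuclideanSpace ℝ (Fin K) := EuclideanSpace.single k 1
  have hpeak : ∀ j, (g - δ • e) j ≤ (g - δ • e) k := fun j => by
    by_cases h : j = k
    · rw [h]
    · simpa [e, h] using hgap j h
  have hle := inner_le_of_forall_le hp hpeak
  have hek : ⟪e, g - δ • e⟫ = (g - δ • e) k := by simp [e, EuclideanSpace.inner_single_left]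
  rw [← hek, inner_sub_right, inner_sub_right, inner_smul_right, inner_smul_right] at hle
  rw [inner_sub_left, inner_sub_left]
  linarith

end probSimplex

lemma norm_proj_sub_single_sq_le {K : ℕ} {p g z : EuclideanSpace ℝ (Fin K)} {k : Fin K}
    {γ δ : ℝ} (hγ : 0 ≤ γ) (hδ : 0 ≤ δ) (hgap : ∀ j ≠ k, g j ≤ g k - δ)
    (hp : p ∈ probSimplex K)
    (hmin : ‖p - (z + γ • g)‖ ≤ ‖EuclideanSpace.single k 1 - (z + γ • g)‖) :
    γ * δ * ‖p - EuclideanSpace.single k 1‖ ^ 2 ≤ 1 + 4 * ‖z‖ := by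
  set e : EuclideanSpace ℝ (Fin K) := EuclideanSpace.single k 1
  have hne : ‖e‖ = 1 := by simp [e]
  have hvar := two_inner_sub_le_of_norm_sub_le hmin
  rw [inner_add_right, real_inner_smul_right, hne] at hvar
  have hsq := norm_sub_sq_le_two_inner_of_norm_le (hne ▸ probSimplex.norm_le_one hp)
  have hgap' := probSimplex.mul_inner_sub_single_le hp hgap
  have hz : -(2 * ‖z‖) ≤ ⟪e - p, z⟫ := by
    have hep : ‖e - p‖ ≤ 2 := by linarith [norm_sub_le e p, probSimplex.norm_le_one hp]
    have := (abs_le.1 (abs_real_inner_le_norm (e - p) z)).1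
    nlinarith [norm_nonneg z]
  calc γ * δ * ‖p - e‖ ^ 2 ≤ γ * δ * (2 * ⟪e - p, e⟫) :=
        mul_le_mul_of_nonneg_left hsq (mul_nonneg hγ hδ)
    _ ≤ 2 * γ * ⟪e - p, g⟫ := by nlinarith [mul_le_mul_of_nonneg_left hgap' hγ]
    _ ≤ 1 + 4 * ‖z‖ := by nlinarith [sq_nonneg ‖p‖]

theorem lass_projection_limit {K : ℕ}
    (g zbar : EuclideanSpace ℝ (Fin K)) (kmax : Fin K)
    (hmax : ∀ k, k ≠ kmax → g k < g kmax)
    (e : EuclideanSpace ℝ (Fin K))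
    (he : e = fun k => if k = kmax then (1 : ℝ) else 0)
    (P : ℝ → EuclideanSpace ℝ (Fin K))
    -- P γ is the Euclidean projection of z̄ + γ g onto the simplex
    (hP : ∀ γ : ℝ, P γ ∈ probSimplex K ∧
      ∀ y ∈ probSimplex K, ‖P γ - (zbar + γ • g)‖ ≤ ‖y - (zbar + γ • g)‖) :
    Tendsto P atTop (𝓝 e) := by
  obtain ⟨δ, hδ, hδle⟩ := exists_pos_le_of_forall_pos
    (f := fun k : {k // k ≠ kmax} => g kmax - g k) fun k => sub_pos.2 (hmax k k.2)
  have hgap : ∀ k ≠ kmax, g k ≤ g kmax - δ := fun k hk => by linarith [hδle ⟨k, hk⟩]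
  obtain rfl : e = EuclideanSpace.single kmax 1 := by
    ext k
    simp [he, PiLp.single_apply]
  have hsq : Tendsto (fun γ => ‖P γ - EuclideanSpace.single kmax 1‖ ^ 2) atTop (𝓝 0) := by
    refine squeeze_zero' (Eventually.of_forall fun _ => sq_nonneg _) ?_
      (tendsto_const_nhds (x := (1 + 4 * ‖zbar‖) / δ).div_atTop tendsto_id)
    filter_upwards [eventually_gt_atTop 0] with γ hγ
    rw [id, le_div_iff₀ hγ, le_div_iff₀ hδ]
    linarith [norm_proj_sub_single_sq_le hγ.le hδ.le hgap (hP γ).1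
      ((hP γ).2 _ (probSimplex.single_mem kmax))]
  rw [tendsto_iff_norm_sub_tendsto_zero]
  simpa using hsq.sqrt
end
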